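/- For positive semidefinite matrices A and B, ‖(AB + BA)/2‖ ≤ ‖(A+B)/2‖². -/

import Mathlib

/-!
Put `C = (A + B) / 2` and `D = C - B = (A - B) / 2`. Then `(AB + BA) / 2 = C² - D²`, and
`-C ≤ D ≤ C` in the Loewner order because `C + D = A` and `C - D = B`; for symmetric operators
this gives `‖D‖ ≤ ‖C‖`. Finally `⟪(C² - D²) x, x⟫ = ‖C x‖² - ‖D x‖²` lies between
`-‖C‖² ‖x‖²` and `‖C‖² ‖x‖²`, and the norm of a symmetric operator is the supremum of
`|⟪T x, x⟫|` over unit vectors.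
-/

open Matrix

/-- The operator (spectral) norm of a real square matrix. -/
noncomputable def opNorm {d : ℕ} (A : Matrix (Fin d) (Fin d) ℝ) : ℝ :=
  ‖Matrix.toEuclideanCLM (𝕜 := ℝ) (n := Fin d) A‖

open scoped ComplexOrder InnerProductSpace

namespace ContinuousLinearMap

open RCLike

variable {𝕜 E : Type*} [RCLike 𝕜] [NormedAddCommGroup E] [InnerProductSpace 𝕜 E]

lemma norm_le_of_abs_re_inner_le {T : E →L[𝕜] E} (hT : T.IsSymmetric) {c : ℝ} (hc : 0 ≤ c)
    (h : ∀ x, |re ⟪T x, x⟫_𝕜| ≤ c * ‖x‖ ^ 2) : ‖T‖ ≤ c := by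
  rw [T.norm_eq_iSup_rayleighQuotient hT]
  refine ciSup_le fun x => ?_
  rw [rayleighQuotient, reApplyInnerSelf_apply, abs_div, abs_sq]
  exact div_le_of_le_mul₀ (by positivity) hc (h x)

lemma re_inner_le_opNorm_mul_sq (T : E →L[𝕜] E) (x : E) : re ⟪T x, x⟫_𝕜 ≤ ‖T‖ * ‖x‖ ^ 2 :=
  calc re ⟪T x, x⟫_𝕜 ≤ ‖T x‖ * ‖x‖ := re_inner_le_norm _ _
    _ ≤ ‖T‖ * ‖x‖ * ‖x‖ := by gcongr; exact T.le_opNorm x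
    _ = ‖T‖ * ‖x‖ ^ 2 := by ring

lemma norm_le_norm_of_neg_le_of_le {S T : E →L[𝕜] E} (hS : S.IsSymmetric) (h₁ : -T ≤ S)
    (h₂ : S ≤ T) : ‖S‖ ≤ ‖T‖ := by
  refine norm_le_of_abs_re_inner_le hS (norm_nonneg T) fun x => ?_
  have hlow := h₁.re_inner_nonneg_left x
  have hup := h₂.re_inner_nonneg_left x
  simp only [sub_neg_eq_add, _root_.add_apply, _root_.sub_apply, inner_add_left, inner_sub_left,
    map_add, map_sub] at hlow hup
  rw [abs_le]
  constructor <;> linarith [T.re_inner_le_opNorm_mul_sq x]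

lemma re_inner_mul_self_apply {T : E →L[𝕜] E} (hT : T.IsSymmetric) (x : E) :
    re ⟪(T * T) x, x⟫_𝕜 = ‖T x‖ ^ 2 := by
  rw [mul_apply_eq_comp, hT.apply_clm, ← norm_sq_eq_re_inner]

lemma norm_mul_self_sub_mul_self_le {C D : E →L[𝕜] E} (hC : C.IsSymmetric) (hD : D.IsSymmetric)
    (hDC : ‖D‖ ≤ ‖C‖) : ‖C * C - D * D‖ ≤ ‖C‖ ^ 2 := by
  have hsymm : (C * C - D * D).IsSymmetric :=
    (hC.mul_of_commute hC (Commute.refl _)).sub (hD.mul_of_commute hD (Commute.refl _))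
  refine norm_le_of_abs_re_inner_le hsymm (by positivity) fun x => ?_
  rw [_root_.sub_apply, inner_sub_left, map_sub, re_inner_mul_self_apply hC,
    re_inner_mul_self_apply hD]
  have hCx : ‖C x‖ ≤ ‖C‖ * ‖x‖ := C.le_opNorm x
  have hDx : ‖D x‖ ≤ ‖C‖ * ‖x‖ := (D.le_opNorm x).trans (by gcongr)
  rw [abs_le]
  constructor <;> nlinarith [norm_nonneg (C x), norm_nonneg (D x)]

theorem norm_symmetrized_mul_le_sq_norm_avg {a b : E →L[𝕜] E} (ha : a.IsPositive)
    (hb : b.IsPositive) : ‖(2 : 𝕜)⁻¹ • (a * b + b * a)‖ ≤ ‖(2 : 𝕜)⁻¹ • (a + b)‖ ^ 2 := by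
  set C := (2 : 𝕜)⁻¹ • (a + b)
  set D := C - b
  have hprod : (2 : 𝕜)⁻¹ • (a * b + b * a) = C * C - D * D := by
    simp only [D, C, sub_mul, mul_sub, add_mul, mul_add, smul_mul_assoc, mul_smul_comm]
    module
  have hC : C.IsPositive := (ha.add hb).smul_of_nonneg (by simp)
  have hD : D.IsSymmetric := hC.isSymmetric.sub hb.isSymmetric
  have hsum : D - -C = a := by simp only [D, C]; module
  rw [hprod]
  refine norm_mul_self_sub_mul_self_le hC.isSymmetric hD (norm_le_norm_of_neg_le_of_le hD ?_ ?_)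
  · rw [le_def, hsum]; exact ha
  · rw [le_def, sub_sub_cancel]; exact hb

end ContinuousLinearMap

lemma Matrix.PosSemidef.isPositive_toEuclideanCLM {𝕜 n : Type*} [RCLike 𝕜] [Fintype n]
    [DecidableEq n] {A : Matrix n n 𝕜} (hA : A.PosSemidef) :
    (toEuclideanCLM (𝕜 := 𝕜) (n := n) A).IsPositive :=
  Matrix.isPositive_toEuclideanLin_iff.mpr hA

/-- For positive semidefinite matrices `A` and `B`,
`‖(A * B + B * A) / 2‖ ≤ ‖(A + B) / 2‖ ^ 2` in the operator norm. -/
theorem opNorm_symmetrized_prod_le_sq_opNorm_avg {d : ℕ} (A B : Matrix (Fin d) (Fin d) ℝ)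
    (hA : A.PosSemidef) (hB : B.PosSemidef) :
    opNorm ((2 : ℝ)⁻¹ • (A * B + B * A)) ≤ opNorm ((2 : ℝ)⁻¹ • (A + B)) ^ 2 := by
  simpa only [opNorm, map_smul, map_add, map_mul] using
    ContinuousLinearMap.norm_symmetrized_mul_le_sq_norm_avg hA.isPositive_toEuclideanCLM
      hB.isPositive_toEuclideanCLM
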